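/- arXiv:2102.02054 — 11 statements merged into one kernel-verified Lean document; each statement's English description precedes it below -/
import Mathlib

section
/- Let s ∈ ℝ³ with |s| > 0 and let t ∈ (1/3, 1]. Then the four numbers q₀ = (1 + t + √(|s|² + 4t²))/4, q₁ = (1 + |s| − t)/4, q₂ = (1 + t − √(|s|² + 4t²))/4, q₃ = (1 − |s| − t)/4 satisfy q₀ > q₁ > q₂ > q₃, they sum to 1, and q₃ ≥ 0 if and only if |s| ≤ 1 − t. -/
/-- Eigenvalues of the canonical Choi state of a non-unital qubit channel:
ordering, normalization, and positivity condition. -/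
theorem stmt_1 (s : EuclideanSpace ℝ (Fin 3)) (t : ℝ)
    (hs : 0 < ‖s‖) (ht0 : 1 / 3 < t) (ht1 : t ≤ 1) :
    (1 + t + Real.sqrt (‖s‖ ^ 2 + 4 * t ^ 2)) / 4 > (1 + ‖s‖ - t) / 4 ∧
    (1 + ‖s‖ - t) / 4 > (1 + t - Real.sqrt (‖s‖ ^ 2 + 4 * t ^ 2)) / 4 ∧
    (1 + t - Real.sqrt (‖s‖ ^ 2 + 4 * t ^ 2)) / 4 > (1 - ‖s‖ - t) / 4 ∧
    (1 + t + Real.sqrt (‖s‖ ^ 2 + 4 * t ^ 2)) / 4 + (1 + ‖s‖ - t) / 4 +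
      (1 + t - Real.sqrt (‖s‖ ^ 2 + 4 * t ^ 2)) / 4 + (1 - ‖s‖ - t) / 4 = 1 ∧
    ((1 - ‖s‖ - t) / 4 ≥ 0 ↔ ‖s‖ ≤ 1 - t) := by
  set r := ‖s‖ with hr
  have ht : 0 < t := by linarith
  have hnn : 0 ≤ Real.sqrt (r ^ 2 + 4 * t ^ 2) := Real.sqrt_nonneg _
  have hsq : Real.sqrt (r ^ 2 + 4 * t ^ 2) ^ 2 = r ^ 2 + 4 * t ^ 2 :=
    Real.sq_sqrt (by positivity)
  have h1 : r ≤ Real.sqrt (r ^ 2 + 4 * t ^ 2) := by nlinarith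
  have h2 : 2 * t ≤ Real.sqrt (r ^ 2 + 4 * t ^ 2) := by nlinarith
  have h3 : Real.sqrt (r ^ 2 + 4 * t ^ 2) < r + 2 * t := by nlinarith
  refine ⟨by linarith, by linarith, by linarith, by ring, ⟨fun h => by linarith, fun h => by linarith⟩⟩
end

section
/- Let p₀, p₁, p₂, p₃ ≥ 0 with p₀ + p₁ + p₂ + p₃ = 1, and define t₁₁ = p₀ + p₁ − p₂ − p₃, t₂₂ = p₀ − p₁ + p₂ − p₃, t₃₃ = p₀ − p₁ − p₂ + p₃. Then |t₁₁| = |t₂₂| = |t₃₃| > 1/3 holds if and only if either (pᵢ = pⱼ = pₖ = (1 − p_l)/3 for some permutation with p_l > 1/2) or (pᵢ = 1 for some i). -/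
/-- Characterization of Bell-diagonal states useful for universal quantum
teleportation among mixing probabilities (p₀,p₁,p₂,p₃). -/
theorem stmt_3 (p : Fin 4 → ℝ) (hp : ∀ i, 0 ≤ p i) (hsum : p 0 + p 1 + p 2 + p 3 = 1) :
    (|p 0 + p 1 - p 2 - p 3| = |p 0 - p 1 + p 2 - p 3| ∧
     |p 0 - p 1 + p 2 - p 3| = |p 0 - p 1 - p 2 + p 3| ∧
     |p 0 + p 1 - p 2 - p 3| > 1 / 3) ↔
    ((∃ l : Fin 4, p l > 1 / 2 ∧ ∀ i : Fin 4, i ≠ l → p i = (1 - p l) / 3) ∨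
     (∃ i : Fin 4, p i = 1)) := by
  have hfin : ∀ i : Fin 4, i = 0 ∨ i = 1 ∨ i = 2 ∨ i = 3 := by omega
  constructor
  · rintro ⟨hab, hbc, hgt⟩
    rcases abs_cases (p 0 + p 1 - p 2 - p 3) with ⟨ea, sa⟩ | ⟨ea, sa⟩ <;>
    rcases abs_cases (p 0 - p 1 + p 2 - p 3) with ⟨eb, sb⟩ | ⟨eb, sb⟩ <;>
    rcases abs_cases (p 0 - p 1 - p 2 + p 3) with ⟨ec, sc⟩ | ⟨ec, sc⟩ <;>
    rw [ea, eb] at hab <;> rw [eb, ec] at hbc <;> rw [ea] at hgt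
    · refine Or.inl ⟨0, by linarith, fun i hi => ?_⟩
      rcases hfin i with rfl | rfl | rfl | rfl <;> first | exact absurd rfl hi | linarith
    · exact absurd (hp 3) (by push_neg; linarith)
    · exact absurd (hp 2) (by push_neg; linarith)
    · refine Or.inl ⟨1, by linarith, fun i hi => ?_⟩
      rcases hfin i with rfl | rfl | rfl | rfl <;> first | exact absurd rfl hi | linarith
    · exact absurd (hp 1) (by push_neg; linarith)
    · refine Or.inl ⟨2, by linarith, fun i hi => ?_⟩
      rcases hfin i with rfl | rfl | rfl | rfl <;> first | exact absurd rfl hi | linarith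
    · refine Or.inl ⟨3, by linarith, fun i hi => ?_⟩
      rcases hfin i with rfl | rfl | rfl | rfl <;> first | exact absurd rfl hi | linarith
    · exact absurd (hp 0) (by push_neg; linarith)
  · rintro (⟨l, hl, hv⟩ | ⟨i, hi⟩)
    · rcases hfin l with rfl | rfl | rfl | rfl
      · have h1 := hv 1 (by decide); have h2 := hv 2 (by decide); have h3 := hv 3 (by decide)
        refine ⟨abs_eq_abs.mpr ?_, abs_eq_abs.mpr ?_, lt_abs.mpr ?_⟩ <;>
          first | exact Or.inl (by linarith) | exact Or.inr (by linarith)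
      · have h1 := hv 0 (by decide); have h2 := hv 2 (by decide); have h3 := hv 3 (by decide)
        refine ⟨abs_eq_abs.mpr ?_, abs_eq_abs.mpr ?_, lt_abs.mpr ?_⟩ <;>
          first | exact Or.inl (by linarith) | exact Or.inr (by linarith)
      · have h1 := hv 0 (by decide); have h2 := hv 1 (by decide); have h3 := hv 3 (by decide)
        refine ⟨abs_eq_abs.mpr ?_, abs_eq_abs.mpr ?_, lt_abs.mpr ?_⟩ <;>
          first | exact Or.inl (by linarith) | exact Or.inr (by linarith)
      · have h1 := hv 0 (by decide); have h2 := hv 1 (by decide); have h3 := hv 2 (by decide)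
        refine ⟨abs_eq_abs.mpr ?_, abs_eq_abs.mpr ?_, lt_abs.mpr ?_⟩ <;>
          first | exact Or.inl (by linarith) | exact Or.inr (by linarith)
    · have h0 := hp 0; have h1 := hp 1; have h2 := hp 2; have h3 := hp 3
      rcases hfin i with rfl | rfl | rfl | rfl <;>
        refine ⟨abs_eq_abs.mpr ?_, abs_eq_abs.mpr ?_, lt_abs.mpr ?_⟩ <;>
          first | exact Or.inl (by linarith) | exact Or.inr (by linarith)
end

section
/- For p ∈ (0,1), the Bell-diagonal state ρ = p|Φ₁⟩⟨Φ₁| + (1−p)|Φ₄⟩⟨Φ₄| has maximal teleportation fidelity F = (2p+1)/3 when p > 1/2, F = 2/3 when p = 1/2, F = 1 − 2p/3 when p < 1/2, and fidelity deviation Δ = 2(1−p)/(3√5), 1/(3√5), 2p/(3√5) in these respective cases; in particular Δ ≠ 0 for all p ∈ (0,1). -/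
open Matrix Complex Kronecker

noncomputable section

/-- The three Pauli matrices. -/
def pauli : Fin 3 → Matrix (Fin 2) (Fin 2) ℂ :=
  ![!![0, 1; 1, 0], !![0, -Complex.I; Complex.I, 0], !![1, 0; 0, -1]]

/-- Outer product |v⟩⟨v| of a two-qubit vector. -/
def proj (v : Fin 2 × Fin 2 → ℂ) : Matrix (Fin 2 × Fin 2) (Fin 2 × Fin 2) ℂ :=
  Matrix.of fun i j => v i * (starRingEnd ℂ) (v j)

/-- The four Bell states Φ₁, Φ₂, Φ₃, Φ₄. -/
def bell : Fin 4 → (Fin 2 × Fin 2 → ℂ) :=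
  ![fun x => if x.1 = x.2 then ((Real.sqrt 2 : ℂ))⁻¹ else 0,
    fun x => if x.1 ≠ x.2 then ((Real.sqrt 2 : ℂ))⁻¹ else 0,
    fun x => if x = (0, 1) then ((Real.sqrt 2 : ℂ))⁻¹ else
             if x = (1, 0) then -((Real.sqrt 2 : ℂ))⁻¹ else 0,
    fun x => if x = (0, 0) then ((Real.sqrt 2 : ℂ))⁻¹ else
             if x = (1, 1) then -((Real.sqrt 2 : ℂ))⁻¹ else 0]

/-- Correlation matrix entries T_ij = Tr(ρ (σ_i ⊗ σ_j)). -/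
def corr (ρ : Matrix (Fin 2 × Fin 2) (Fin 2 × Fin 2) ℂ) (i j : Fin 3) : ℝ :=
  (Matrix.trace (ρ * (pauli i ⊗ₖ pauli j))).re

/-- Maximal teleportation fidelity of a state with diagonal correlation matrix. -/
def maxFid (ρ : Matrix (Fin 2 × Fin 2) (Fin 2 × Fin 2) ℂ) : ℝ :=
  (1 + (|corr ρ 0 0| + |corr ρ 1 1| + |corr ρ 2 2|) / 3) / 2

/-- Fidelity deviation of a state with diagonal correlation matrix. -/
def fidDev (ρ : Matrix (Fin 2 × Fin 2) (Fin 2 × Fin 2) ℂ) : ℝ :=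
  (3 * Real.sqrt 10)⁻¹ *
    Real.sqrt ((|corr ρ 0 0| - |corr ρ 1 1|) ^ 2 + (|corr ρ 0 0| - |corr ρ 2 2|) ^ 2 +
      (|corr ρ 1 1| - |corr ρ 2 2|) ^ 2)

/-!
The correlation coefficients are real-linear in the state, so the diagonal of `T` for
`p Φ₁ + (1 - p) Φ₄` is `p (1, -1, 1) + (1 - p) (-1, 1, 1) = (t, -t, 1)` with `t = 2p - 1`.
Then `F = (|t| + 2) / 3`, and the squared differences sum to `2 (1 - |t|)²`, so
`Δ = (1 - |t|) / (3 √5)`, which is positive since `|2p - 1| < 1` on `(0, 1)`.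
-/

lemma corr_add (ρ σ : Matrix (Fin 2 × Fin 2) (Fin 2 × Fin 2) ℂ) (i j : Fin 3) :
    corr (ρ + σ) i j = corr ρ i j + corr σ i j := by
  simp only [corr, Matrix.add_mul, Matrix.trace_add, Complex.add_re]

lemma corr_ofReal_smul (a : ℝ) (ρ : Matrix (Fin 2 × Fin 2) (Fin 2 × Fin 2) ℂ) (i j : Fin 3) :
    corr ((a : ℂ) • ρ) i j = a * corr ρ i j := by
  simp only [corr, Matrix.smul_mul, Matrix.trace_smul, smul_eq_mul, Complex.re_ofReal_mul]

lemma inv_sqrt_two_mul_self : ((Real.sqrt 2 : ℂ))⁻¹ * ((Real.sqrt 2 : ℂ))⁻¹ = 2⁻¹ := by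
  rw [← mul_inv, ← Complex.ofReal_mul, Real.mul_self_sqrt zero_le_two, Complex.ofReal_ofNat]

lemma corr_proj_bell_zero_diag (i : Fin 3) : corr (proj (bell 0)) i i = ![1, -1, 1] i := by
  fin_cases i <;>
  simp [corr, pauli, proj, bell, Matrix.trace, Matrix.mul_apply, Fintype.sum_prod_type,
    Fin.sum_univ_succ, inv_sqrt_two_mul_self, map_inv₀] <;> norm_num

lemma corr_proj_bell_three_diag (i : Fin 3) : corr (proj (bell 3)) i i = ![-1, 1, 1] i := by
  fin_cases i <;>
  simp [corr, pauli, proj, bell, Matrix.trace, Matrix.mul_apply, Fintype.sum_prod_type,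
    Fin.sum_univ_succ, inv_sqrt_two_mul_self, map_inv₀] <;> norm_num

lemma maxFid_eq_of_corr_diag {ρ : Matrix (Fin 2 × Fin 2) (Fin 2 × Fin 2) ℂ} {t : ℝ}
    (h0 : corr ρ 0 0 = t) (h1 : corr ρ 1 1 = -t) (h2 : corr ρ 2 2 = 1) :
    maxFid ρ = (|t| + 2) / 3 := by
  rw [maxFid, h0, h1, h2, abs_neg, abs_one]
  ring

lemma fidDev_eq_of_corr_diag {ρ : Matrix (Fin 2 × Fin 2) (Fin 2 × Fin 2) ℂ} {t : ℝ}
    (h0 : corr ρ 0 0 = t) (h1 : corr ρ 1 1 = -t) (h2 : corr ρ 2 2 = 1) (ht : |t| ≤ 1) :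
    fidDev ρ = (1 - |t|) / (3 * Real.sqrt 5) := by
  have hsum : (|t| - |t|) ^ 2 + (|t| - 1) ^ 2 + (|t| - 1) ^ 2
      = (Real.sqrt 2 * (1 - |t|)) ^ 2 := by
    rw [mul_pow, Real.sq_sqrt zero_le_two]
    ring
  have hsqrt10 : Real.sqrt 10 = Real.sqrt 2 * Real.sqrt 5 := by
    rw [← Real.sqrt_mul zero_le_two]
    norm_num
  rw [fidDev, h0, h1, h2, abs_neg, abs_one, hsum,
    Real.sqrt_sq (mul_nonneg (Real.sqrt_nonneg 2) (sub_nonneg.mpr ht)), hsqrt10]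
  field_simp

abbrev dephasedBell (p : ℝ) : Matrix (Fin 2 × Fin 2) (Fin 2 × Fin 2) ℂ :=
  (p : ℂ) • proj (bell 0) + ((1 - p : ℝ) : ℂ) • proj (bell 3)

lemma corr_dephasedBell (p : ℝ) (i j : Fin 3) :
    corr (dephasedBell p) i j =
      p * corr (proj (bell 0)) i j + (1 - p) * corr (proj (bell 3)) i j := by
  rw [corr_add, corr_ofReal_smul, corr_ofReal_smul]

lemma corr_dephasedBell_diag (p : ℝ) :
    corr (dephasedBell p) 0 0 = 2 * p - 1 ∧ corr (dephasedBell p) 1 1 = -(2 * p - 1) ∧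
      corr (dephasedBell p) 2 2 = 1 := by
  refine ⟨?_, ?_, ?_⟩ <;>
  · rw [corr_dephasedBell, corr_proj_bell_zero_diag, corr_proj_bell_three_diag]
    simp only [Matrix.cons_val]
    ring

/-- Dephasing-channel output p|Φ₁⟩⟨Φ₁| + (1-p)|Φ₄⟩⟨Φ₄|: maximal fidelity and
fidelity deviation in the three regimes, and nonvanishing deviation. -/
theorem stmt_4 (p : ℝ) (hp0 : 0 < p) (hp1 : p < 1) :
    (1 / 2 < p → maxFid ((p : ℂ) • proj (bell 0) + ((1 - p : ℝ) : ℂ) • proj (bell 3))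
        = (2 * p + 1) / 3) ∧
    (p = 1 / 2 → maxFid ((p : ℂ) • proj (bell 0) + ((1 - p : ℝ) : ℂ) • proj (bell 3))
        = 2 / 3) ∧
    (p < 1 / 2 → maxFid ((p : ℂ) • proj (bell 0) + ((1 - p : ℝ) : ℂ) • proj (bell 3))
        = 1 - 2 * p / 3) ∧
    (1 / 2 < p → fidDev ((p : ℂ) • proj (bell 0) + ((1 - p : ℝ) : ℂ) • proj (bell 3))
        = 2 * (1 - p) / (3 * Real.sqrt 5)) ∧
    (p = 1 / 2 → fidDev ((p : ℂ) • proj (bell 0) + ((1 - p : ℝ) : ℂ) • proj (bell 3))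
        = 1 / (3 * Real.sqrt 5)) ∧
    (p < 1 / 2 → fidDev ((p : ℂ) • proj (bell 0) + ((1 - p : ℝ) : ℂ) • proj (bell 3))
        = 2 * p / (3 * Real.sqrt 5)) ∧
    fidDev ((p : ℂ) • proj (bell 0) + ((1 - p : ℝ) : ℂ) • proj (bell 3)) ≠ 0 := by
  obtain ⟨h0, h1, h2⟩ := corr_dephasedBell_diag p
  have ht : |2 * p - 1| < 1 := abs_sub_lt_iff.mpr ⟨by linarith, by linarith⟩
  have hF : maxFid (dephasedBell p) = (|2 * p - 1| + 2) / 3 := maxFid_eq_of_corr_diag h0 h1 h2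
  have hΔ : fidDev (dephasedBell p) = (1 - |2 * p - 1|) / (3 * Real.sqrt 5) :=
    fidDev_eq_of_corr_diag h0 h1 h2 ht.le
  refine ⟨fun h => ?_, fun h => ?_, fun h => ?_, fun h => ?_, fun h => ?_, fun h => ?_, ?_⟩
  · rw [hF, abs_of_pos (by linarith)]; ring
  · rw [hF, h]; norm_num
  · rw [hF, abs_of_neg (by linarith)]; ring
  · rw [hΔ, abs_of_pos (by linarith)]; ring
  · rw [hΔ, h]; norm_num
  · rw [hΔ, abs_of_neg (by linarith)]; ring
  · rw [hΔ]
    exact (div_pos (sub_pos.mpr ht) (by positivity)).ne'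

end
end

section
/- For p ∈ (0,1), the two-qubit state ρ = p|Φ₁⟩⟨Φ₁| + (1−p)(I₂/2) ⊗ |0⟩⟨0| has correlation matrix eigenvalues of absolute value p, p, p; consequently its maximal fidelity is (1+p)/2, which exceeds 2/3 iff p > 1/3, and its fidelity deviation is 0 for all p ∈ (0,1). -/
open Matrix Complex Kronecker

noncomputable section

lemma corr_val (p : ℝ) (i j : Fin 3) : corr ((p : ℂ) • proj (bell 0) +
        ((1 - p : ℝ) : ℂ) • (((2 : ℂ)⁻¹ • (1 : Matrix (Fin 2) (Fin 2) ℂ)) ⊗ₖ !![1, 0; 0, 0])) i j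
        = if i = j then (if i = 1 then -p else p) else 0 := by
  have h2 : ((Real.sqrt 2 : ℂ))⁻¹ * ((Real.sqrt 2 : ℂ))⁻¹ = 2⁻¹ := by
    rw [← mul_inv, ← Complex.ofReal_mul, Real.mul_self_sqrt (by norm_num)]
    norm_num
  fin_cases i <;> fin_cases j <;>
  · simp only [corr, Matrix.trace, Matrix.diag, Matrix.mul_apply, Matrix.kroneckerMap_apply,
      Fintype.sum_prod_type, Fin.sum_univ_two, Matrix.add_apply, Matrix.smul_apply,
      Matrix.one_apply, proj, bell, pauli, Matrix.of_apply, Matrix.cons_val', Matrix.cons_val_zero,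
      Matrix.cons_val_one, Matrix.head_cons, Matrix.empty_val', Matrix.cons_val_fin_one,
      Matrix.head_fin_const]
    norm_num [Complex.ext_iff, h2, Complex.add_re, Complex.mul_re, Fin.ext_iff]
    try ring

/-- The state p|Φ₁⟩⟨Φ₁| + (1-p)(I₂/2)⊗|0⟩⟨0| has diagonal correlation matrix with
entries of absolute value p; its maximal fidelity is (1+p)/2, exceeding 2/3 iff
p > 1/3, and its fidelity deviation vanishes. -/
theorem stmt_5 (p : ℝ) (hp0 : 0 < p) (hp1 : p < 1) :
    (∀ i : Fin 3, |corr ((p : ℂ) • proj (bell 0) +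
        ((1 - p : ℝ) : ℂ) • (((2 : ℂ)⁻¹ • (1 : Matrix (Fin 2) (Fin 2) ℂ)) ⊗ₖ !![1, 0; 0, 0])) i i| = p) ∧
    (∀ i j : Fin 3, i ≠ j → corr ((p : ℂ) • proj (bell 0) +
        ((1 - p : ℝ) : ℂ) • (((2 : ℂ)⁻¹ • (1 : Matrix (Fin 2) (Fin 2) ℂ)) ⊗ₖ !![1, 0; 0, 0])) i j = 0) ∧
    maxFid ((p : ℂ) • proj (bell 0) +
        ((1 - p : ℝ) : ℂ) • (((2 : ℂ)⁻¹ • (1 : Matrix (Fin 2) (Fin 2) ℂ)) ⊗ₖ !![1, 0; 0, 0])) = (1 + p) / 2 ∧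
    ((1 + p) / 2 > 2 / 3 ↔ p > 1 / 3) ∧
    fidDev ((p : ℂ) • proj (bell 0) +
        ((1 - p : ℝ) : ℂ) • (((2 : ℂ)⁻¹ • (1 : Matrix (Fin 2) (Fin 2) ℂ)) ⊗ₖ !![1, 0; 0, 0])) = 0 := by
  have habs : ∀ i : Fin 3, |corr ((p : ℂ) • proj (bell 0) +
      ((1 - p : ℝ) : ℂ) • (((2 : ℂ)⁻¹ • (1 : Matrix (Fin 2) (Fin 2) ℂ)) ⊗ₖ !![1, 0; 0, 0])) i i| = p := by
    intro i
    rw [corr_val]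
    rw [if_pos rfl]
    split <;> simp [abs_of_pos hp0, abs_of_neg (neg_neg_iff_pos.mpr hp0 : -p < 0)]
  refine ⟨habs, ?_, ?_, ?_, ?_⟩
  · intro i j hij
    rw [corr_val, if_neg hij]
  · unfold maxFid
    rw [habs 0, habs 1, habs 2]
    ring
  · constructor <;> intro h <;> linarith
  · unfold fidDev
    rw [habs 0, habs 1, habs 2]
    simp

end
end

section
/- Let p₀ > p₁ > p₂ > p₃ > 0 with Σpᵢ = 1, and let p₀ > 1/2. Then the Bell-diagonal state ρ = Σᵢ pᵢ|Φ_{i+1}⟩⟨Φ_{i+1}| has maximal fidelity (2p₀+1)/3 > 2/3 but nonzero fidelity deviation. -/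
open Matrix Complex Kronecker

noncomputable section

theorem sqrt2_mul_self : Real.sqrt 2 * Real.sqrt 2 = 2 := Real.mul_self_sqrt (by norm_num)

theorem corr00 (p : Fin 4 → ℝ) :
    corr (∑ i : Fin 4, ((p i : ℝ) : ℂ) • proj (bell i)) 0 0 = p 0 + p 1 - p 2 - p 3 := by
  simp [corr, pauli, proj, bell, Matrix.trace, Matrix.mul_apply, Matrix.kroneckerMap_apply,
    Fin.sum_univ_succ, Fintype.sum_prod_type, Matrix.sum_apply, Matrix.smul_apply,
    show (Fin.succ 2 : Fin 4) = 3 from rfl]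
  linear_combination (p 0 + p 1 - p 2 - p 3)/2 * sqrt2_mul_self

theorem corr11 (p : Fin 4 → ℝ) :
    corr (∑ i : Fin 4, ((p i : ℝ) : ℂ) • proj (bell i)) 1 1 = -(p 0 - p 1 + p 2 - p 3) := by
  simp [corr, pauli, proj, bell, Matrix.trace, Matrix.mul_apply, Matrix.kroneckerMap_apply,
    Fin.sum_univ_succ, Fintype.sum_prod_type, Matrix.sum_apply, Matrix.smul_apply,
    show (Fin.succ 2 : Fin 4) = 3 from rfl]
  linear_combination (-(p 0) + p 1 - p 2 + p 3)/2 * sqrt2_mul_self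

theorem corr22 (p : Fin 4 → ℝ) :
    corr (∑ i : Fin 4, ((p i : ℝ) : ℂ) • proj (bell i)) 2 2 = p 0 - p 1 - p 2 + p 3 := by
  simp [corr, pauli, proj, bell, Matrix.trace, Matrix.mul_apply, Matrix.kroneckerMap_apply,
    Fin.sum_univ_succ, Fintype.sum_prod_type, Matrix.sum_apply, Matrix.smul_apply,
    show (Fin.succ 2 : Fin 4) = 3 from rfl]
  linear_combination (p 0 - p 1 - p 2 + p 3)/2 * sqrt2_mul_self

/-- A Bell-diagonal state with strictly ordered probabilities p₀ > p₁ > p₂ > p₃ > 0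
and p₀ > 1/2 has maximal fidelity (2p₀+1)/3 > 2/3 but nonzero fidelity deviation. -/
theorem stmt_7 (p : Fin 4 → ℝ)
    (hord : p 3 > 0 ∧ p 2 > p 3 ∧ p 1 > p 2 ∧ p 0 > p 1)
    (hsum : p 0 + p 1 + p 2 + p 3 = 1) (hhalf : p 0 > 1 / 2) :
    maxFid (∑ i : Fin 4, ((p i : ℝ) : ℂ) • proj (bell i)) = (2 * p 0 + 1) / 3 ∧
    (2 * p 0 + 1) / 3 > 2 / 3 ∧
    fidDev (∑ i : Fin 4, ((p i : ℝ) : ℂ) • proj (bell i)) ≠ 0 := by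
  obtain ⟨h3, h23, h12, h01⟩ := hord
  set ρ := ∑ i : Fin 4, ((p i : ℝ) : ℂ) • proj (bell i) with hρ
  have c0 := corr00 p
  have c1 := corr11 p
  have c2 := corr22 p
  have a0 : |corr ρ 0 0| = p 0 + p 1 - p 2 - p 3 := by
    rw [c0]; exact abs_of_pos (by linarith)
  have a1 : |corr ρ 1 1| = p 0 - p 1 + p 2 - p 3 := by
    rw [c1, abs_neg]; exact abs_of_pos (by linarith)
  have a2 : |corr ρ 2 2| = p 0 - p 1 - p 2 + p 3 := by
    rw [c2]; exact abs_of_pos (by linarith)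
  refine ⟨?_, by linarith, ?_⟩
  · rw [maxFid, a0, a1, a2]; linarith
  · rw [fidDev, a0, a1, a2]
    apply mul_ne_zero
    · simp [Real.sqrt_eq_zero']
    · have h1 : (p 0 + p 1 - p 2 - p 3 - (p 0 - p 1 + p 2 - p 3)) ^ 2 > 0 := by
        have : p 0 + p 1 - p 2 - p 3 - (p 0 - p 1 + p 2 - p 3) > 0 := by linarith
        positivity
      have : (p 0 + p 1 - p 2 - p 3 - (p 0 - p 1 + p 2 - p 3)) ^ 2 +
          (p 0 + p 1 - p 2 - p 3 - (p 0 - p 1 - p 2 + p 3)) ^ 2 +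
          (p 0 - p 1 + p 2 - p 3 - (p 0 - p 1 - p 2 + p 3)) ^ 2 > 0 := by
        nlinarith [sq_nonneg (p 0 + p 1 - p 2 - p 3 - (p 0 - p 1 - p 2 + p 3)),
          sq_nonneg (p 0 - p 1 + p 2 - p 3 - (p 0 - p 1 - p 2 + p 3))]
      exact ne_of_gt (Real.sqrt_pos.mpr this)


end
end

section
/- If C ∈ (0,1) and a channel mixing probability p₀ ∈ [0,1] satisfy p₁ = p₂ = (1 + (1 − 2p₀)C)/(4 + 2C) and p₃ = 1 − p₀ − 2p₁, then the common value t = (4p₀ − 1)C/(2 + C) satisfies t > 1/3 together with 0 ≤ pᵢ ≤ 1 for all i and p₀ > p₁ + p₂ + p₃ if and only if 1/2 < C < 1 and (1 + 2C)/(6C) < p₀ ≤ 1/(2 − C). -/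
/-- For a Pauli channel acting on half of a pure state of concurrence `C`, with
`p₁ = p₂` and `p₃` forced by the equal-correlation condition, the final state is
useful for universal quantum teleportation iff `1/2 < C < 1` and
`(1+2C)/(6C) < p₀ ≤ 1/(2-C)`. -/
theorem stmt_8 (C p₀ p₁ p₂ p₃ t : ℝ)
    (hC0 : 0 < C) (hC1 : C < 1) (hp₀0 : 0 ≤ p₀) (hp₀1 : p₀ ≤ 1)
    (h1 : p₁ = (1 + (1 - 2 * p₀) * C) / (4 + 2 * C))
    (h2 : p₂ = (1 + (1 - 2 * p₀) * C) / (4 + 2 * C))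
    (h3 : p₃ = 1 - p₀ - 2 * p₁)
    (ht : t = (4 * p₀ - 1) * C / (2 + C)) :
    (t > 1 / 3 ∧
     (0 ≤ p₀ ∧ p₀ ≤ 1) ∧ (0 ≤ p₁ ∧ p₁ ≤ 1) ∧ (0 ≤ p₂ ∧ p₂ ≤ 1) ∧ (0 ≤ p₃ ∧ p₃ ≤ 1) ∧
     p₀ > p₁ + p₂ + p₃) ↔
    (1 / 2 < C ∧ C < 1 ∧ (1 + 2 * C) / (6 * C) < p₀ ∧ p₀ ≤ 1 / (2 - C)) := by
  have hden : (0:ℝ) < 4 + 2 * C := by linarith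
  have h2C : (0:ℝ) < 2 + C := by linarith
  have h6C : (0:ℝ) < 6 * C := by linarith
  have h2mC : (0:ℝ) < 2 - C := by linarith
  have e1 : p₁ * (4 + 2 * C) = 1 + (1 - 2 * p₀) * C := by
    rw [h1]; field_simp
  constructor
  · rintro ⟨ht3, -, ⟨hp10, hp11⟩, -, ⟨hp30, -⟩, hgt⟩
    rw [ht, gt_iff_lt, div_lt_div_iff₀ (by norm_num) h2C] at ht3
    -- ht3 : 1 * (2+C) < (4p₀-1)*C*3
    rw [h3] at hp30
    -- hp30 : 0 ≤ 1 - p₀ - 2*p₁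
    have key : p₀ * (2 - C) ≤ 1 := by nlinarith
    have hChalf : 1 / 2 < C := by nlinarith [mul_pos h2mC hC0, mul_nonneg hp₀0 hC0.le]
    refine ⟨hChalf, hC1, ?_, ?_⟩
    · rw [div_lt_iff₀ h6C]; nlinarith
    · rw [le_div_iff₀ h2mC]; linarith
  · rintro ⟨hChalf, -, hlow, hhigh⟩
    rw [div_lt_iff₀ h6C] at hlow
    rw [le_div_iff₀ h2mC] at hhigh
    have hp10 : 0 ≤ p₁ := by nlinarith
    have hp11 : p₁ ≤ 1 := by nlinarith
    have hp30 : 0 ≤ p₃ := by rw [h3]; nlinarith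
    have hp31 : p₃ ≤ 1 := by rw [h3]; nlinarith
    have hp0half : 1 / 2 < p₀ := by nlinarith
    refine ⟨?_, ⟨hp₀0, hp₀1⟩, ⟨hp10, hp11⟩, ⟨by rw [h2, ← h1]; exact hp10, by rw [h2, ← h1]; exact hp11⟩, ⟨hp30, hp31⟩, ?_⟩
    · rw [ht, gt_iff_lt, div_lt_div_iff₀ (by norm_num) h2C]; nlinarith
    · rw [h3]; linarith
end

section
/- For γ ∈ [0,1], F(γ) = 1/2 + (2√(1−γ) + (1−γ))/6 satisfies F(γ) > 2/3 if and only if γ < 2(√2 − 1), and Δ(γ) = (√(1−γ)/(3√5))(1 − √(1−γ)) equals 0 if and only if γ = 0 or γ = 1. -/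
theorem stmt_12 (γ : ℝ) (h0 : 0 ≤ γ) (h1 : γ ≤ 1) :
    (1 / 2 + (2 * Real.sqrt (1 - γ) + (1 - γ)) / 6 > 2 / 3 ↔ γ < 2 * (Real.sqrt 2 - 1)) ∧
    (Real.sqrt (1 - γ) / (3 * Real.sqrt 5) * (1 - Real.sqrt (1 - γ)) = 0 ↔ γ = 0 ∨ γ = 1) := by
  set s := Real.sqrt (1 - γ) with hsdef
  have hs0 : 0 ≤ s := Real.sqrt_nonneg _
  have hs2 : s ^ 2 = 1 - γ := Real.sq_sqrt (by linarith)
  have h2 : Real.sqrt 2 ^ 2 = 2 := Real.sq_sqrt (by norm_num)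
  have h2n : 0 ≤ Real.sqrt 2 := Real.sqrt_nonneg _
  constructor
  · constructor
    · intro h
      have h' : (s + 1) ^ 2 > 2 := by nlinarith
      have hlt : Real.sqrt 2 < s + 1 := by nlinarith [sq_nonneg (Real.sqrt 2 - (s + 1))]
      nlinarith
    · intro h
      have hgt : Real.sqrt 2 - 1 < s := by nlinarith [sq_nonneg (Real.sqrt 2 - 1 - s)]
      nlinarith
  · have h5 : Real.sqrt 5 > 0 := Real.sqrt_pos.mpr (by norm_num)
    rw [mul_eq_zero, div_eq_zero_iff]
    constructor
    · rintro ((h | h) | h)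
      · right
        have : (1 : ℝ) - γ = 0 := by
          have := Real.sqrt_eq_zero (by linarith : (0:ℝ) ≤ 1 - γ) |>.mp h
          exact this
        linarith
      · exact absurd h (by positivity)
      · left
        have hs1 : s = 1 := by linarith
        have : (1 : ℝ) - γ = 1 := by
          have := Real.sqrt_eq_one.mp hs1
          exact this
        linarith
    · rintro (h | h)
      · right
        simp [hsdef, h]
      · left; left
        simp [hsdef, h]
end

section
/- For C ∈ (0,1) and p₂ ∈ (0, (1+C)/(1+C+√(1−C²))), the value F = (1 + p₂ C)/2 exceeds 2/3 if and only if C > (√17 − 1)/6 and 1/(3C) < p₂; moreover the interval (1/(3C), (1+C)/(1+C+√(1−C²))) is nonempty exactly when C > (√17 − 1)/6. -/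
theorem stmt_13 (C p₂ : ℝ) (hC0 : 0 < C) (hC1 : C < 1)
    (hp0 : 0 < p₂) (hp1 : p₂ < (1 + C) / (1 + C + Real.sqrt (1 - C ^ 2))) :
    ((1 + p₂ * C) / 2 > 2 / 3 ↔ (C > (Real.sqrt 17 - 1) / 6 ∧ 1 / (3 * C) < p₂)) ∧
    (1 / (3 * C) < (1 + C) / (1 + C + Real.sqrt (1 - C ^ 2)) ↔ C > (Real.sqrt 17 - 1) / 6) := by
  set s := Real.sqrt (1 - C ^ 2) with hsdef
  have hs0 : 0 ≤ s := Real.sqrt_nonneg _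
  have hs2 : s ^ 2 = 1 - C ^ 2 := Real.sq_sqrt (by nlinarith)
  have ht : Real.sqrt 17 ^ 2 = 17 := Real.sq_sqrt (by norm_num)
  have ht0 : 0 ≤ Real.sqrt 17 := Real.sqrt_nonneg _
  have hden : (0:ℝ) < 1 + C + s := by linarith
  have h3C : (0:ℝ) < 3 * C := by linarith
  have key : 1 / (3 * C) < (1 + C) / (1 + C + s) ↔ C > (Real.sqrt 17 - 1) / 6 := by
    rw [div_lt_div_iff₀ h3C hden]
    constructor
    · intro h
      have h9 : 9 * C ^ 2 + 3 * C - 4 > 0 := by nlinarith [hs2, hs0]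
      nlinarith [ht, ht0, sq_nonneg (Real.sqrt 17 - (6 * C + 1))]
    · intro h
      have h1 : Real.sqrt 17 < 6 * C + 1 := by linarith
      have h9 : 9 * C ^ 2 + 3 * C - 4 > 0 := by nlinarith
      have hC3 : 1 / 3 < C := by nlinarith
      nlinarith [hs2, hs0, sq_nonneg (s - (1 + C) * (3 * C - 1))]
  refine ⟨?_, key⟩
  constructor
  · intro h
    have hpc : 1 / (3 * C) < p₂ := by
      rw [div_lt_iff₀ h3C]; nlinarith
    exact ⟨key.mp (lt_trans hpc hp1), hpc⟩
  · rintro ⟨-, hpc⟩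
    rw [div_lt_iff₀ h3C] at hpc
    nlinarith
end

section
/- Define F(C) = (3 − √(1−C²) + √(3C² − 2 + 2√(1−C²)))/4 for C ∈ (0,1) where the inner radicand is nonnegative. Then F(C) > 2/3 if and only if C > √((2/3)(4+√3)(1 − (4+√3)/6)) ≈ 0.41. -/
theorem stmt_14 (C : ℝ) (hC0 : 0 < C) (hC1 : C < 1)
    (hrad : 0 ≤ 3 * C ^ 2 - 2 + 2 * Real.sqrt (1 - C ^ 2)) :
    (3 - Real.sqrt (1 - C ^ 2) + Real.sqrt (3 * C ^ 2 - 2 + 2 * Real.sqrt (1 - C ^ 2))) / 4 > 2 / 3 ↔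
      C > Real.sqrt ((2 / 3) * (4 + Real.sqrt 3) * (1 - (4 + Real.sqrt 3) / 6)) := by
  have h1C : (0:ℝ) < 1 - C ^ 2 := by nlinarith
  set s := Real.sqrt (1 - C ^ 2) with hs
  have hs2 : s ^ 2 = 1 - C ^ 2 := Real.sq_sqrt h1C.le
  have hs0 : 0 < s := Real.sqrt_pos.mpr h1C
  have hs1 : s < 1 := by nlinarith
  set t := Real.sqrt 3 with ht
  have ht2 : t ^ 2 = 3 := Real.sq_sqrt (by norm_num)
  have ht1 : 1 < t := by nlinarith [Real.sqrt_nonneg 3]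
  have hRHS : (2 / 3) * (4 + t) * (1 - (4 + t) / 6) = (5 - 2 * t) / 9 := by
    linear_combination (-(1:ℝ)/9) * ht2
  rw [hRHS, show (C > Real.sqrt ((5 - 2 * t) / 9)) ↔ (5 - 2 * t) / 9 < C ^ 2 from Real.sqrt_lt' hC0]
  have hrpos : 0 < 3 * C ^ 2 - 2 + 2 * s := by nlinarith
  have key : Real.sqrt (3 * C ^ 2 - 2 + 2 * s) > s - 1 / 3 ↔ s < (1 + t) / 3 := by
    constructor
    · intro h
      by_contra hcon
      push_neg at hcon
      have hle : 3 * C ^ 2 - 2 + 2 * s ≤ (s - 1 / 3) ^ 2 := by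
        nlinarith [mul_nonneg (by linarith : (0:ℝ) ≤ s - (1 + t) / 3)
          (by nlinarith : (0:ℝ) ≤ s - (1 - t) / 3)]
      have h2 := Real.sqrt_le_sqrt hle
      rw [Real.sqrt_sq (by nlinarith : (0:ℝ) ≤ s - 1 / 3)] at h2
      linarith
    · intro h
      rcases le_or_gt s (1 / 3) with h3 | h3
      · have := Real.sqrt_pos.mpr hrpos
        linarith
      · have hlt : (s - 1 / 3) ^ 2 < 3 * C ^ 2 - 2 + 2 * s := by
          nlinarith [mul_pos (by linarith : (0:ℝ) < (1 + t) / 3 - s)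
            (by nlinarith : (0:ℝ) < s - (1 - t) / 3)]
        have h2 := Real.sqrt_lt_sqrt (sq_nonneg _) hlt
        rwa [Real.sqrt_sq (by linarith : (0:ℝ) ≤ s - 1 / 3)] at h2
  constructor
  · intro h
    have hk := key.mp (by linarith)
    nlinarith
  · intro h
    have hsl : s < (1 + t) / 3 := by nlinarith
    have hk := key.mpr hsl
    linarith
end

section
/- Let ρ be a positive semidefinite 4×4 Hermitian matrix of the Choi form with entries determined by parameters s₁, s₂, s₃, t₁₁, t₂₂, t₃₃ as in the canonical Choi matrix (diagonal (1±s₃±t₃₃)/4, off-diagonal entries (s₁∓is₂)/4 and (t₁₁±t₂₂)/4). If rank ρ = 2, then s₃(t₃₃ + t₁₁t₂₂) = 0, s₂(t₂₂ + t₁₁t₃₃) = 0, and s₁(t₁₁ + t₂₂t₃₃) = 0. -/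
open Matrix Complex ComplexOrder

noncomputable section

/-- The canonical Choi matrix with parameters s₁, s₂, s₃, t₁₁, t₂₂, t₃₃. -/
def choiMat (s₁ s₂ s₃ t₁₁ t₂₂ t₃₃ : ℝ) : Matrix (Fin 4) (Fin 4) ℂ :=
  (4 : ℂ)⁻¹ •
    !![1 + (s₃ : ℂ) + (t₃₃ : ℂ), (s₁ : ℂ) - (s₂ : ℂ) * Complex.I, 0, (t₁₁ : ℂ) - (t₂₂ : ℂ);
       (s₁ : ℂ) + (s₂ : ℂ) * Complex.I, 1 - (s₃ : ℂ) - (t₃₃ : ℂ), (t₁₁ : ℂ) + (t₂₂ : ℂ), 0;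
       0, (t₁₁ : ℂ) + (t₂₂ : ℂ), 1 + (s₃ : ℂ) - (t₃₃ : ℂ), (s₁ : ℂ) - (s₂ : ℂ) * Complex.I;
       (t₁₁ : ℂ) - (t₂₂ : ℂ), 0, (s₁ : ℂ) + (s₂ : ℂ) * Complex.I, 1 - (s₃ : ℂ) + (t₃₃ : ℂ)]

/-! Each relation is a fixed linear combination of 3×3 minors of the Choi matrix, and all
3×3 minors of a matrix of rank 2 vanish. -/

theorem Matrix.det_submatrix_eq_zero_of_rank_lt {m n k K : Type*} [Field K] [Fintype n]
    [Fintype k] [DecidableEq k] (A : Matrix m n K) (r : k → m) (c : k → n)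
    (h : A.rank < Fintype.card k) : (A.submatrix r c).det = 0 := by
  by_contra hdet
  have hfull := rank_of_isUnit (A.submatrix r c)
    ((isUnit_iff_isUnit_det _).mpr (isUnit_iff_ne_zero.mpr hdet))
  have := rank_submatrix_le A r c
  omega

section minors

variable (s₁ s₂ s₃ t₁₁ t₂₂ t₃₃ : ℝ)

local notation "M" => choiMat s₁ s₂ s₃ t₁₁ t₂₂ t₃₃

theorem choiMat_principal_minors_combination :
    ((M).submatrix ![0, 1, 2] ![0, 1, 2]).det + ((M).submatrix ![0, 1, 3] ![0, 1, 3]).det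
      - ((M).submatrix ![0, 2, 3] ![0, 2, 3]).det - ((M).submatrix ![1, 2, 3] ![1, 2, 3]).det
      = -(s₃ * (t₃₃ + t₁₁ * t₂₂) / 8 : ℂ) := by
  simp only [det_fin_three, choiMat, submatrix_apply, Matrix.smul_apply, of_apply, smul_eq_mul,
    cons_val', cons_val_zero, cons_val_one, cons_val, cons_val_fin_one]
  ring

theorem choiMat_mixed_minors_sub :
    ((M).submatrix ![0, 2, 3] ![0, 1, 2]).det - ((M).submatrix ![0, 1, 2] ![0, 2, 3]).det
      + ((M).submatrix ![1, 2, 3] ![0, 1, 3]).det - ((M).submatrix ![0, 1, 3] ![1, 2, 3]).det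
      = (s₂ * (t₂₂ + t₁₁ * t₃₃) / 8 : ℂ) * I := by
  simp only [det_fin_three, choiMat, submatrix_apply, Matrix.smul_apply, of_apply, smul_eq_mul,
    cons_val', cons_val_zero, cons_val_one, cons_val, cons_val_fin_one]
  ring

theorem choiMat_mixed_minors_add :
    ((M).submatrix ![0, 2, 3] ![0, 1, 2]).det + ((M).submatrix ![0, 1, 2] ![0, 2, 3]).det
      + ((M).submatrix ![0, 1, 3] ![1, 2, 3]).det + ((M).submatrix ![1, 2, 3] ![0, 1, 3]).det
      = (s₁ * (t₁₁ + t₂₂ * t₃₃) / 8 : ℂ) := by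
  simp only [det_fin_three, choiMat, submatrix_apply, Matrix.smul_apply, of_apply, smul_eq_mul,
    cons_val', cons_val_zero, cons_val_one, cons_val, cons_val_fin_one]
  ring

end minors

theorem stmt_16_general (s₁ s₂ s₃ t₁₁ t₂₂ t₃₃ : ℝ)
    (hrank : (choiMat s₁ s₂ s₃ t₁₁ t₂₂ t₃₃).rank = 2) :
    s₃ * (t₃₃ + t₁₁ * t₂₂) = 0 ∧
    s₂ * (t₂₂ + t₁₁ * t₃₃) = 0 ∧
    s₁ * (t₁₁ + t₂₂ * t₃₃) = 0 := by
  have minor_eq_zero (r c : Fin 3 → Fin 4) := (choiMat s₁ s₂ s₃ t₁₁ t₂₂ t₃₃).det_submatrix_eq_zero_of_rank_lt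
    r c (by simp [hrank])
  have h₃ := choiMat_principal_minors_combination s₁ s₂ s₃ t₁₁ t₂₂ t₃₃
  have h₂ := choiMat_mixed_minors_sub s₁ s₂ s₃ t₁₁ t₂₂ t₃₃
  have h₁ := choiMat_mixed_minors_add s₁ s₂ s₃ t₁₁ t₂₂ t₃₃
  simp only [minor_eq_zero, sub_zero, add_zero] at h₁ h₂ h₃
  refine ⟨?_, ?_, ?_⟩
  · exact_mod_cast (by linear_combination 8 * h₃ : (s₃ : ℂ) * (t₃₃ + t₁₁ * t₂₂) = 0)
  · have := (mul_eq_zero.mp h₂.symm).resolve_right I_ne_zero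
    exact_mod_cast (by linear_combination 8 * this : (s₂ : ℂ) * (t₂₂ + t₁₁ * t₃₃) = 0)
  · exact_mod_cast (by linear_combination -8 * h₁ : (s₁ : ℂ) * (t₁₁ + t₂₂ * t₃₃) = 0)

/-- If a positive semidefinite Choi matrix has rank two, then the parameters
satisfy the three compatibility relations. -/
theorem stmt_16 (s₁ s₂ s₃ t₁₁ t₂₂ t₃₃ : ℝ)
    (hpsd : (choiMat s₁ s₂ s₃ t₁₁ t₂₂ t₃₃).PosSemidef)
    (hrank : (choiMat s₁ s₂ s₃ t₁₁ t₂₂ t₃₃).rank = 2) :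
    s₃ * (t₃₃ + t₁₁ * t₂₂) = 0 ∧
    s₂ * (t₂₂ + t₁₁ * t₃₃) = 0 ∧
    s₁ * (t₁₁ + t₂₂ * t₃₃) = 0 :=
  stmt_16_general s₁ s₂ s₃ t₁₁ t₂₂ t₃₃ hrank

end
end

section
/- For r ∈ (0, π/4], F(r) = 1/2 + (cos²r + 2 cos r)/6 satisfies F(r) > 2/3, and Δ(r) = (cos r − cos²r)/(3√5) satisfies Δ(r) > 0; hence the final state of the Unruh channel acting on one half of a Bell state is useful but never universal for quantum teleportation. -/
theorem stmt_19 (r : ℝ) (hr0 : 0 < r) (hr1 : r ≤ Real.pi / 4) :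
    1 / 2 + ((Real.cos r) ^ 2 + 2 * Real.cos r) / 6 > 2 / 3 ∧
    (Real.cos r - (Real.cos r) ^ 2) / (3 * Real.sqrt 5) > 0 := by
  have hpi : Real.pi / 4 < Real.pi / 2 := by
    have := Real.pi_pos; linarith
  have hlb : Real.sqrt 2 / 2 ≤ Real.cos r := by
    have := Real.cos_le_cos_of_nonneg_of_le_pi (le_of_lt hr0)
      (by linarith [Real.pi_pos]) hr1
    rwa [Real.cos_pi_div_four] at this
  have hub : Real.cos r < 1 := by
    have := Real.cos_lt_cos_of_nonneg_of_le_pi (le_refl (0:ℝ))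
      (by linarith [Real.pi_pos]) hr0
    simpa using this
  have h2 : (1.41:ℝ) ≤ Real.sqrt 2 := by
    rw [show (1.41:ℝ) = Real.sqrt (1.41^2) by rw [Real.sqrt_sq]; norm_num]
    exact Real.sqrt_le_sqrt (by norm_num)
  have hc : (0.7:ℝ) ≤ Real.cos r := by linarith
  constructor
  · nlinarith
  · have h5 : 0 < Real.sqrt 5 := Real.sqrt_pos.mpr (by norm_num)
    apply div_pos
    · nlinarith
    · linarith
end
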